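/- arXiv:2409.18689 — 3 statements merged into one kernel-verified Lean document; each statement's English description precedes it below -/
import Mathlib

section
/- Let E1 and E2 be independent random variables taking values in the group G = (ZMod 2)², each depolarizing with rates ε1 and ε2 respectively (ε1, ε2 ∈ [0,1]). Then P(E1 + E2 ≠ 0) = ε1 + ε2 − (4/3)·ε1·ε2. -/
/-- A random variable taking values in a finite additive group `G` is *depolarizing*
with rate `ε` if it equals `0` with probability `1 - ε` and equals each of the
`|G| - 1` nonzero elements with probability `ε / (|G| - 1)`. -/
def IsDepolarizing {G : Type*} [Fintype G] [AddGroup G] (p : G → ℝ) (ε : ℝ) : Prop :=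
  p 0 = 1 - ε ∧ ∀ g : G, g ≠ 0 → p g = ε / ((Fintype.card G : ℝ) - 1)

/-! Since `P(E1 + E2 = 0) = ∑ₐ P(E1 = a) P(E2 = -a)`, only the pairs `(0, 0)` and `(a, -a)` with
`a ≠ 0` contribute; for a depolarizing pair on a group of order `n` this gives
`(1 - ε1)(1 - ε2) + ε1 ε2 / (n - 1)`, and the complement is `ε1 + ε2 - n/(n - 1) · ε1 ε2`,
which is `ε1 + ε2 - (4/3) ε1 ε2` for the Pauli group of order `4`. -/

open Finset

theorem Fintype.card_sub_one_ne_zero (G : Type*) [Fintype G] [Nontrivial G] :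
    (Fintype.card G : ℝ) - 1 ≠ 0 := by
  rw [sub_ne_zero]
  exact_mod_cast (Fintype.one_lt_card (α := G)).ne'

section

variable {G : Type*} [Fintype G] [AddGroup G]

theorem sum_eq_add_card_sub_one_mul_of_forall_ne_zero {f : G → ℝ} {c : ℝ}
    (hf : ∀ g, g ≠ 0 → f g = c) : ∑ g, f g = f 0 + ((Fintype.card G : ℝ) - 1) * c := by
  classical
  rw [Fintype.sum_eq_add_sum_compl 0, sum_congr rfl fun g hg => hf g (by simpa using hg),
    sum_const, card_compl, card_singleton, nsmul_eq_mul,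
    Nat.cast_sub Fintype.card_pos, Nat.cast_one]

theorem sum_sum_ite_add_ne_zero_eq_mul_sub [DecidableEq G] (p1 p2 : G → ℝ) :
    (∑ a, ∑ b, if a + b ≠ 0 then p1 a * p2 b else 0)
      = (∑ a, p1 a) * (∑ b, p2 b) - ∑ a, p1 a * p2 (-a) := by
  have hsplit : ∀ a b, (if a + b ≠ 0 then p1 a * p2 b else 0)
      = p1 a * p2 b - if b = -a then p1 a * p2 b else 0 := by
    intro a b
    by_cases h : b = -a <;> simp [h, add_eq_zero_iff_eq_neg']
  simp only [hsplit, sum_sub_distrib, sum_ite_eq', mem_univ, if_true, sum_mul_sum]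

namespace IsDepolarizing

variable [Nontrivial G] {p p1 p2 : G → ℝ} {ε ε1 ε2 : ℝ}

theorem sum_eq_one (h : IsDepolarizing p ε) : ∑ g, p g = 1 := by
  rw [sum_eq_add_card_sub_one_mul_of_forall_ne_zero h.2, h.1,
    mul_div_cancel₀ _ (Fintype.card_sub_one_ne_zero G)]
  ring

theorem sum_mul_neg (h1 : IsDepolarizing p1 ε1) (h2 : IsDepolarizing p2 ε2) :
    ∑ a, p1 a * p2 (-a) = (1 - ε1) * (1 - ε2) + ε1 * ε2 / ((Fintype.card G : ℝ) - 1) := by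
  have hne : ∀ a : G, a ≠ 0 → p1 a * p2 (-a)
      = ε1 / ((Fintype.card G : ℝ) - 1) * (ε2 / ((Fintype.card G : ℝ) - 1)) :=
    fun a ha => by rw [h1.2 a ha, h2.2 (-a) (neg_ne_zero.mpr ha)]
  rw [sum_eq_add_card_sub_one_mul_of_forall_ne_zero hne, neg_zero, h1.1, h2.1]
  field_simp [Fintype.card_sub_one_ne_zero G]

theorem sum_sum_ite_add_ne_zero [DecidableEq G]
    (h1 : IsDepolarizing p1 ε1) (h2 : IsDepolarizing p2 ε2) :
    (∑ a, ∑ b, if a + b ≠ 0 then p1 a * p2 b else 0)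
      = ε1 + ε2 - (Fintype.card G : ℝ) / ((Fintype.card G : ℝ) - 1) * (ε1 * ε2) := by
  rw [sum_sum_ite_add_ne_zero_eq_mul_sub, h1.sum_eq_one, h2.sum_eq_one, sum_mul_neg h1 h2]
  field_simp [Fintype.card_sub_one_ne_zero G]
  ring

end IsDepolarizing

end

theorem depolarizing_sum_ne_zero_single_qubit_general
    (ε1 ε2 : ℝ)
    (p1 p2 : ZMod 2 × ZMod 2 → ℝ)
    (h1 : IsDepolarizing p1 ε1) (h2 : IsDepolarizing p2 ε2) :
    (∑ a : ZMod 2 × ZMod 2, ∑ b : ZMod 2 × ZMod 2, if a + b ≠ 0 then p1 a * p2 b else 0)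
      = ε1 + ε2 - (4 / 3) * (ε1 * ε2) := by
  rw [h1.sum_sum_ite_add_ne_zero h2]
  norm_num

/-- If `E1` and `E2` are independent random variables on `G = (ZMod 2)²` (single-qubit
Pauli errors modulo phase), each depolarizing with rates `ε1` and `ε2` respectively,
then `P(E1 + E2 ≠ 0) = ε1 + ε2 − (4/3)·ε1·ε2`.  Independence means the joint
distribution is the product of the marginals. -/
theorem depolarizing_sum_ne_zero_single_qubit
    (ε1 ε2 : ℝ) (hε1 : ε1 ∈ Set.Icc (0 : ℝ) 1) (hε2 : ε2 ∈ Set.Icc (0 : ℝ) 1)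
    (p1 p2 : ZMod 2 × ZMod 2 → ℝ)
    (h1 : IsDepolarizing p1 ε1) (h2 : IsDepolarizing p2 ε2) :
    (∑ a : ZMod 2 × ZMod 2, ∑ b : ZMod 2 × ZMod 2, if a + b ≠ 0 then p1 a * p2 b else 0)
      = ε1 + ε2 - (4 / 3) * (ε1 * ε2) :=
  depolarizing_sum_ne_zero_single_qubit_general ε1 ε2 p1 p2 h1 h2
end

section
/- Let E1 and E2 be independent random variables taking values in the group G = (ZMod 2)⁴, each depolarizing with rates ε1 and ε2 respectively (ε1, ε2 ∈ [0,1]). Then P(E1 + E2 ≠ 0) = ε1 + ε2 − (16/15)·ε1·ε2. -/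
open Finset

section

variable {G : Type*} [Fintype G]

theorem card_compl_singleton_cast [DecidableEq G] (g : G) :
    ((({g}ᶜ : Finset G)).card : ℝ) = Fintype.card G - 1 := by
  rw [card_compl, card_singleton, Nat.cast_sub (Fintype.card_pos_iff.mpr ⟨g⟩), Nat.cast_one]

theorem card_cast_sub_one_ne_zero [Nontrivial G] : (Fintype.card G : ℝ) - 1 ≠ 0 := by
  have : (1 : ℝ) < Fintype.card G := by exact_mod_cast Fintype.one_lt_card
  linarith

variable [DecidableEq G] [AddGroup G]

theorem sum_sum_ite_add_ne_zero_mul_eq_sub (p₁ p₂ : G → ℝ) :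
    (∑ a, ∑ b, if a + b ≠ 0 then p₁ a * p₂ b else 0)
      = (∑ a, p₁ a) * (∑ b, p₂ b) - ∑ a, p₁ a * p₂ (-a) := by
  have hsplit : ∀ a b : G, (if a + b ≠ 0 then p₁ a * p₂ b else 0)
      = p₁ a * p₂ b - if -a = b then p₁ a * p₂ b else 0 := by
    intro a b
    by_cases h : a + b = 0 <;> simp [h, add_eq_zero_iff_neg_eq.not, ← add_eq_zero_iff_neg_eq]
  simp only [hsplit, sum_sub_distrib, sum_ite_eq, mem_univ, if_true, sum_mul_sum]

variable [Nontrivial G] {p p₁ p₂ : G → ℝ} {ε ε₁ ε₂ : ℝ}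

theorem IsDepolarizing.sum_eq_one_s2 (h : IsDepolarizing p ε) : ∑ g, p g = 1 := by
  rw [Fintype.sum_eq_add_sum_compl 0, h.1,
    sum_congr rfl fun g hg => h.2 g (by simpa using hg), sum_const, nsmul_eq_mul,
    card_compl_singleton_cast, mul_div_cancel₀ _ card_cast_sub_one_ne_zero]
  ring

theorem IsDepolarizing.sum_mul_neg_s2 (h₁ : IsDepolarizing p₁ ε₁) (h₂ : IsDepolarizing p₂ ε₂) :
    ∑ g, p₁ g * p₂ (-g)
      = (1 - ε₁) * (1 - ε₂) + ε₁ * ε₂ / ((Fintype.card G : ℝ) - 1) := by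
  have hN := card_cast_sub_one_ne_zero (G := G)
  rw [Fintype.sum_eq_add_sum_compl 0, neg_zero, h₁.1, h₂.1,
    sum_congr rfl fun g hg => by
      rw [h₁.2 g (by simpa using hg), h₂.2 (-g) (by simpa using hg)],
    sum_const, nsmul_eq_mul, card_compl_singleton_cast]
  field_simp

theorem IsDepolarizing.sum_sum_ite_add_ne_zero_mul
    (h₁ : IsDepolarizing p₁ ε₁) (h₂ : IsDepolarizing p₂ ε₂) :
    (∑ a, ∑ b, if a + b ≠ 0 then p₁ a * p₂ b else 0)
      = ε₁ + ε₂ - Fintype.card G / ((Fintype.card G : ℝ) - 1) * (ε₁ * ε₂) := by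
  have hN := card_cast_sub_one_ne_zero (G := G)
  rw [sum_sum_ite_add_ne_zero_mul_eq_sub, h₁.sum_eq_one_s2, h₂.sum_eq_one_s2, h₁.sum_mul_neg_s2 h₂]
  field_simp
  ring

end

theorem depolarizing_sum_ne_zero_two_qubit_general
    (ε1 ε2 : ℝ)
    (p1 p2 : (Fin 4 → ZMod 2) → ℝ)
    (h1 : IsDepolarizing p1 ε1) (h2 : IsDepolarizing p2 ε2) :
    (∑ a : Fin 4 → ZMod 2, ∑ b : Fin 4 → ZMod 2, if a + b ≠ 0 then p1 a * p2 b else 0)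
      = ε1 + ε2 - (16 / 15) * (ε1 * ε2) := by
  have hcard : (Fintype.card (Fin 4 → ZMod 2) : ℝ) = 16 := by simp
  rw [h1.sum_sum_ite_add_ne_zero_mul h2, hcard]
  norm_num

/-- If `E1` and `E2` are independent random variables on `G = (ZMod 2)⁴` (two-qubit
Pauli errors modulo phase), each depolarizing with rates `ε1` and `ε2` respectively,
then `P(E1 + E2 ≠ 0) = ε1 + ε2 − (16/15)·ε1·ε2`.  Independence means the joint
distribution is the product of the marginals. -/
theorem depolarizing_sum_ne_zero_two_qubit
    (ε1 ε2 : ℝ) (hε1 : ε1 ∈ Set.Icc (0 : ℝ) 1) (hε2 : ε2 ∈ Set.Icc (0 : ℝ) 1)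
    (p1 p2 : (Fin 4 → ZMod 2) → ℝ)
    (h1 : IsDepolarizing p1 ε1) (h2 : IsDepolarizing p2 ε2) :
    (∑ a : Fin 4 → ZMod 2, ∑ b : Fin 4 → ZMod 2, if a + b ≠ 0 then p1 a * p2 b else 0)
      = ε1 + ε2 - (16 / 15) * (ε1 * ε2) :=
  depolarizing_sum_ne_zero_two_qubit_general ε1 ε2 p1 p2 h1 h2
end

section
/- Let G be a finite group with |G| = g ≥ 2, and let E1, E2 be independent G-valued random variables, each depolarizing with rates ε1 and ε2 respectively (ε1, ε2 ∈ [0,1]). Set ε' = ε1 + ε2 − (g/(g−1))·ε1·ε2. Then the product E1·E2 is again depolarizing with rate ε': that is, P(E1·E2 = 1) = 1 − ε' and P(E1·E2 = h) = ε'/(g − 1) for every h ≠ 1. -/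
/-!
Write a distribution on a finite group of order `n` as the mixture
`(1 - s) • uniform + s • δ₁`. Convolving with the uniform distribution gives the uniform
distribution, so the weights `s` multiply under convolution. A depolarizing distribution of
rate `ε` is such a mixture with `s = 1 - n / (n - 1) * ε`, and
`ε' = ε₁ + ε₂ - n / (n - 1) * ε₁ * ε₂` is exactly the rate for which
`1 - n / (n - 1) * ε' = (1 - n / (n - 1) * ε₁) * (1 - n / (n - 1) * ε₂)`.
-/

/-- A random variable taking values in a finite (multiplicative) group `G` is
*depolarizing* with rate `ε` if it equals the identity with probability `1 - ε` and
equals each of the `|G| - 1` nonidentity elements with probability `ε / (|G| - 1)`. -/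
def IsDepolarizingMul {G : Type*} [Fintype G] [Group G] (p : G → ℝ) (ε : ℝ) : Prop :=
  p 1 = 1 - ε ∧ ∀ h : G, h ≠ 1 → p h = ε / ((Fintype.card G : ℝ) - 1)

section

variable {G K : Type*} [Fintype G] [Group G] [DecidableEq G]

def mulConv [NonUnitalNonAssocSemiring K] (p q : G → K) (h : G) : K :=
  ∑ a : G, ∑ b : G, if a * b = h then p a * q b else 0

theorem mulConv_apply [NonUnitalNonAssocSemiring K] (p q : G → K) (h : G) :
    mulConv p q h = ∑ a : G, p a * q (a⁻¹ * h) := by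
  simp only [mulConv, ← eq_inv_mul_iff_mul_eq, Finset.sum_ite_eq']
  simp

variable (G) in
def uniformMix [Field K] (s : K) (x : G) : K :=
  (1 - s) / Fintype.card G + if x = 1 then s else 0

theorem mulConv_uniformMix [Field K] [CharZero K] (s t : K) :
    mulConv (uniformMix G s) (uniformMix G t) = uniformMix G (s * t) := by
  have hcard : (Fintype.card G : K) ≠ 0 := by simp
  funext h
  simp only [mulConv_apply, uniformMix, inv_mul_eq_one, mul_add, add_mul, Finset.sum_add_distrib,
    mul_ite, ite_mul, mul_zero, zero_mul, Finset.sum_ite_eq', Finset.mem_univ, if_true,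
    Finset.sum_const, Finset.card_univ, nsmul_eq_mul]
  field_simp
  ring

theorem isDepolarizingMul_iff_eq_uniformMix [Nontrivial G] (p : G → ℝ) (ε : ℝ) :
    IsDepolarizingMul p ε ↔
      p = uniformMix G (1 - Fintype.card G / (Fintype.card G - 1) * ε) := by
  have hcard : (Fintype.card G : ℝ) - 1 ≠ 0 :=
    sub_ne_zero.mpr (by exact_mod_cast Fintype.one_lt_card.ne')
  constructor
  · rintro ⟨h_one, h_ne_one⟩
    funext x
    by_cases hx : x = 1
    · subst hx
      simp only [h_one, uniformMix, if_true]
      field_simp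
      ring
    · simp only [h_ne_one x hx, uniformMix, hx, if_false]
      field_simp
      ring
  · rintro rfl
    refine ⟨?_, fun h hh => ?_⟩
    · simp only [uniformMix, if_true]
      field_simp
      ring
    · simp only [uniformMix, hh, if_false]
      field_simp
      ring

end

theorem depolarizing_mul_depolarizing_general
    {G : Type*} [Fintype G] [Group G] [DecidableEq G]
    (g : ℕ) (hcard : Fintype.card G = g) (hg : 2 ≤ g)
    (ε1 ε2 ε' : ℝ)
    (hε' : ε' = ε1 + ε2 - ((g : ℝ) / ((g : ℝ) - 1)) * (ε1 * ε2))
    (p1 p2 : G → ℝ)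
    (h1 : IsDepolarizingMul p1 ε1) (h2 : IsDepolarizingMul p2 ε2) :
    IsDepolarizingMul (fun h : G => ∑ a : G, ∑ b : G, if a * b = h then p1 a * p2 b else 0) ε' := by
  have : Nontrivial G := Fintype.one_lt_card_iff_nontrivial.mp (hcard ▸ hg)
  have hg1 : (g : ℝ) - 1 ≠ 0 := sub_ne_zero.mpr (by exact_mod_cast (by omega : g ≠ 1))
  rw [isDepolarizingMul_iff_eq_uniformMix] at h1 h2 ⊢
  change mulConv p1 p2 = _
  rw [h1, h2, mulConv_uniformMix, hcard, hε']
  congr 1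
  field_simp
  ring

/-- Let `G` be a finite group with `|G| = g ≥ 2`, and let `E1, E2` be independent
`G`-valued random variables, depolarizing with rates `ε1` and `ε2` respectively
(`ε1, ε2 ∈ [0,1]`).  Set `ε' = ε1 + ε2 − (g/(g−1))·ε1·ε2`.  Then the product `E1·E2`
(whose distribution is the convolution of the two marginal distributions, by
independence) is again depolarizing with rate `ε'`. -/
theorem depolarizing_mul_depolarizing
    {G : Type*} [Fintype G] [Group G] [DecidableEq G]
    (g : ℕ) (hcard : Fintype.card G = g) (hg : 2 ≤ g)
    (ε1 ε2 ε' : ℝ) (hε1 : ε1 ∈ Set.Icc (0 : ℝ) 1) (hε2 : ε2 ∈ Set.Icc (0 : ℝ) 1)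
    (hε' : ε' = ε1 + ε2 - ((g : ℝ) / ((g : ℝ) - 1)) * (ε1 * ε2))
    (p1 p2 : G → ℝ)
    (h1 : IsDepolarizingMul p1 ε1) (h2 : IsDepolarizingMul p2 ε2) :
    IsDepolarizingMul (fun h : G => ∑ a : G, ∑ b : G, if a * b = h then p1 a * p2 b else 0) ε' :=
  depolarizing_mul_depolarizing_general g hcard hg ε1 ε2 ε' hε' p1 p2 h1 h2
end
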